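/- arXiv:1710.09247 — 3 statements merged into one kernel-verified Lean document; each statement's English description precedes it below -/
import Mathlib

section
/- Fix c ≥ 1 and d ≥ 0. Define a monomial of width m (m ≥ d) to be a pair (u, π) where u: [m] → ℕ₀^c is an exponent vector assignment and π: [d] → [m] is strictly increasing. Say (u, π) FIO-divides (v, ρ), where (v, ρ) has width n, if there exists a strictly increasing map ε: [m] → [n] with ρ = ε ∘ π and u(i) ≤ v(ε(i)) componentwise for all i ∈ [m]. Then FIO-divisibility is a well-partial-order on the set of all such monomials (over all widths m). -/
/-- A monomial of the free FIO-module `F(d)` over `(X^{OI,1})^{⊗c}`: a width `m`, an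
exponent assignment `u : [m] → ℕ₀^c`, and a strictly increasing `π : [d] → [m]`. -/
def FIOMonomial (c d : ℕ) : Type :=
  Σ m : ℕ, (Fin m → (Fin c → ℕ)) × {π : Fin d → Fin m // StrictMono π}

/-- FIO-divisibility: `(u, π)` divides `(v, ρ)` iff there is a strictly increasing
`ε` with `ρ = ε ∘ π` and `u i ≤ v (ε i)` componentwise for all `i`. -/
def FIODvd {c d : ℕ} (μ ν : FIOMonomial c d) : Prop :=
  ∃ ε : Fin μ.1 → Fin ν.1, StrictMono ε ∧
    (∀ t : Fin d, ν.2.2.1 t = ε (μ.2.2.1 t)) ∧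
    ∀ i : Fin μ.1, μ.2.1 i ≤ ν.2.1 (ε i)

/-!
Encode a monomial `(u, π)` of width `m` as the word of length `m` whose `i`-th letter is the
exponent vector `u i` marked with `t` if `i = π t`, and unmarked otherwise. Letters are compared
componentwise on exponents and by equality on markers; this is a well-quasi-order by Dickson's lemma,
since the markers range over a finite set. An embedding of words in the sense of Higman's lemma
preserves markers, so it sends `π` to `ρ` and is an FIO-divisibility: Higman's lemma then makes
FIO-divisibility a well-quasi-order. It is antisymmetric because a strictly increasing self-map
of `Fin m` is the identity.
-/

theorem WellQuasiOrdered.of_map_rel {α β : Type*} {r : α → α → Prop} {s : β → β → Prop}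
    (hs : WellQuasiOrdered s) (f : α → β) (hf : ∀ a b, s (f a) (f b) → r a b) :
    WellQuasiOrdered r := fun g ↦
  let ⟨i, j, hij, h⟩ := hs (f ∘ g)
  ⟨i, j, hij, hf _ _ h⟩

theorem WellQuasiOrdered.sublistForall₂ {α : Type*} {r : α → α → Prop} [IsPreorder α r]
    (hr : WellQuasiOrdered r) : WellQuasiOrdered (List.SublistForall₂ r) := by
  rw [← Set.partiallyWellOrderedOn_univ_iff] at hr ⊢
  simpa using hr.partiallyWellOrderedOn_sublistForall₂ r

theorem List.SublistForall₂.exists_strictMono {α β : Type*} {r : α → β → Prop}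
    {l₁ : List α} {l₂ : List β} (h : List.SublistForall₂ r l₁ l₂) :
    ∃ ε : Fin l₁.length → Fin l₂.length, StrictMono ε ∧ ∀ i, r l₁[i] l₂[ε i] := by
  induction h with
  | nil => exact ⟨Fin.elim0, fun i ↦ i.elim0, fun i ↦ i.elim0⟩
  | cons hab _ ih =>
    obtain ⟨ε, hε, hr⟩ := ih
    exact ⟨Fin.cons 0 (Fin.succ ∘ ε),
      Fin.strictMono_cons.2 ⟨fun _ ↦ Fin.succ_pos _, Fin.strictMono_succ.comp hε⟩,
      Fin.cases hab hr⟩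
  | cons_right _ ih =>
    obtain ⟨ε, hε, hr⟩ := ih
    exact ⟨Fin.succ ∘ ε, Fin.strictMono_succ.comp hε, hr⟩

theorem List.SublistForall₂.exists_strictMono_of_ofFn {α β : Type*} {r : α → β → Prop}
    {m n : ℕ} {f : Fin m → α} {g : Fin n → β}
    (h : List.SublistForall₂ r (List.ofFn f) (List.ofFn g)) :
    ∃ ε : Fin m → Fin n, StrictMono ε ∧ ∀ i, r (f i) (g (ε i)) := by
  obtain ⟨ε, hε, hr⟩ := h.exists_strictMono
  refine ⟨Fin.cast List.length_ofFn ∘ ε ∘ Fin.cast List.length_ofFn.symm,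
    (Fin.cast_strictMono _).comp (hε.comp (Fin.cast_strictMono _)), fun i ↦ ?_⟩
  have hi := hr (Fin.cast List.length_ofFn.symm i)
  simp only [Fin.getElem_fin, List.getElem_ofFn] at hi
  exact hi

namespace FIOMonomial

variable {c d : ℕ}

noncomputable def marker (μ : FIOMonomial c d) (i : Fin μ.1) : Option (Fin d) :=
  Function.partialInv μ.2.2.1 i

theorem marker_eq_some_iff {μ : FIOMonomial c d} {i : Fin μ.1} {t : Fin d} :
    μ.marker i = some t ↔ μ.2.2.1 t = i :=
  μ.2.2.2.injective.isPartialInv t i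

def LetterLE (a b : (Fin c → ℕ) × Option (Fin d)) : Prop :=
  a.1 ≤ b.1 ∧ a.2 = b.2

instance : IsPreorder ((Fin c → ℕ) × Option (Fin d)) LetterLE where
  refl _ := ⟨le_rfl, rfl⟩
  trans _ _ _ h h' := ⟨h.1.trans h'.1, h.2.trans h'.2⟩

theorem wellQuasiOrdered_letterLE : WellQuasiOrdered (@LetterLE c d) :=
  wellQuasiOrdered_le.prod (Finite.wellQuasiOrdered _)

noncomputable def toWord (μ : FIOMonomial c d) : List ((Fin c → ℕ) × Option (Fin d)) :=
  List.ofFn fun i ↦ (μ.2.1 i, μ.marker i)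

end FIOMonomial

namespace FIODvd

open FIOMonomial

variable {c d : ℕ}

theorem refl (μ : FIOMonomial c d) : FIODvd μ μ :=
  ⟨id, strictMono_id, fun _ ↦ rfl, fun _ ↦ le_rfl⟩

theorem trans {μ ν ξ : FIOMonomial c d} : FIODvd μ ν → FIODvd ν ξ → FIODvd μ ξ := by
  rintro ⟨ε, hε, hπ, hu⟩ ⟨δ, hδ, hρ, hv⟩
  exact ⟨δ ∘ ε, hδ.comp hε, fun t ↦ by rw [hρ, hπ, Function.comp_apply],
    fun i ↦ (hu i).trans (hv (ε i))⟩

theorem antisymm {μ ν : FIOMonomial c d} : FIODvd μ ν → FIODvd ν μ → μ = ν := by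
  obtain ⟨m, u, π, hπ⟩ := μ
  obtain ⟨n, v, ρ, hρ⟩ := ν
  rintro ⟨ε, hε, hπρ, huv⟩ ⟨δ, hδ, -, hvu⟩
  obtain rfl : m = n :=
    (Fin.le_of_injective ε hε.injective).antisymm (Fin.le_of_injective δ hδ.injective)
  obtain rfl : ε = id := hε.eq_id
  obtain rfl : δ = id := hδ.eq_id
  obtain rfl : u = v := funext fun i ↦ (huv i).antisymm (hvu i)
  obtain rfl : π = ρ := funext fun t ↦ (hπρ t).symm
  rfl

theorem of_sublistForall₂_toWord {μ ν : FIOMonomial c d}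
    (h : List.SublistForall₂ LetterLE μ.toWord ν.toWord) : FIODvd μ ν := by
  obtain ⟨ε, hε, hle⟩ := h.exists_strictMono_of_ofFn
  exact ⟨ε, hε, fun t ↦ marker_eq_some_iff.1 ((hle _).2.symm.trans (marker_eq_some_iff.2 rfl)),
    fun i ↦ (hle i).1⟩

theorem wellQuasiOrdered : WellQuasiOrdered (@FIODvd c d) :=
  wellQuasiOrdered_letterLE.sublistForall₂.of_map_rel toWord fun _ _ ↦ of_sublistForall₂_toWord

end FIODvd

/-- FIO-divisibility is a well-partial-order on the monomials of `F(d)` over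
`(X^{OI,1})^{⊗c}`: it is a partial order in which every infinite sequence contains
a pair of comparable elements with increasing indices. -/
theorem fioDvd_wpo (c d : ℕ) :
    (∀ μ : FIOMonomial c d, FIODvd μ μ) ∧
    (∀ μ ν ξ : FIOMonomial c d, FIODvd μ ν → FIODvd ν ξ → FIODvd μ ξ) ∧
    (∀ μ ν : FIOMonomial c d, FIODvd μ ν → FIODvd ν μ → μ = ν) ∧
    (∀ f : ℕ → FIOMonomial c d, ∃ i j, i < j ∧ FIODvd (f i) (f j)) :=
  ⟨FIODvd.refl, fun _ _ _ ↦ FIODvd.trans, fun _ _ ↦ FIODvd.antisymm, FIODvd.wellQuasiOrdered⟩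
end

section
/- Let K be a field and consider, for each n, the polynomial ring R_n = K[x_{i,j} : 1 ≤ i < j ≤ n]. For i ≥ 3 let u_i = x_{1,2} x_{2,3} ⋯ x_{i−1,i} x_{1,i} ∈ R_i (the cycle monomial on vertices 1,...,i). Then for i < j and any injection ε: [j_0] → [n] (with j_0 large enough that u_i, u_j are defined), no monomial of the form ε*(u_i) divides any monomial of the form ε'*(u_j) in R_n, where ε* sends x_{a,b} to x_{ε(a),ε(b)} (indices reordered so the first is smaller). Consequently, the ascending chain of ideals generated by the orbits of u₃, then u₃,u₄, then u₃,u₄,u₅, ... is strictly increasing. -/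
open MvPolynomial

/-- The cycle monomial of length `i` on the vertices `ε 0, ε 1, …, ε (i-1)`, in the
polynomial ring with one variable `x_{a,b}` for each unordered pair `{a,b}`
(the formalization of `K[x_{i,j} : i < j]` where indices are reordered). -/
noncomputable def cycleMono (K : Type*) [Field K] (ε : ℕ → ℕ) (i : ℕ) :
    MvPolynomial (Sym2 ℕ) K :=
  (∏ t ∈ Finset.range (i - 1), X s(ε t, ε (t + 1))) *
    X s(ε 0, ε (i - 1))

/-- The ideal generated by the orbits (under injections of the vertex set) of the
cycle monomials `u₃, …, u_r`. -/
noncomputable def cycleIdeal (K : Type*) [Field K] (r : ℕ) :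
    Ideal (MvPolynomial (Sym2 ℕ) K) :=
  Ideal.span {p | ∃ i, 3 ≤ i ∧ i ≤ r ∧
    ∃ ε : ℕ → ℕ, Function.Injective ε ∧ p = cycleMono K ε i}

/-! The edges of a cycle form a squarefree monomial, so divisibility of cycle monomials is
containment of edge sets. Suppose the edges of a cycle `C` of length `i ≥ 3` are edges of a cycle
`C'`. Every vertex of `C` lies on two edges of `C` and on at most two edges of `C'`, so both
`C'`-edges at such a vertex are edges of `C`. Walking around `C'` from an edge it shares with `C`
then shows that all edges of `C'` are edges of `C`, hence the length of `C'` is at most `i`.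
For the ideals: `u_{r+1}` is a monomial, so if it lay in the monomial ideal generated by the
images of `u_3, …, u_r`, one of these would divide it. -/

open Finset

section CycleEdges

variable {α : Type*} {n m : ℕ} {v : ZMod n → α} {w : ZMod m → α}

def cycleEdge (v : ZMod n → α) (t : ZMod n) : Sym2 α := s(v t, v (t + 1))

lemma ZMod.two_ne_zero_of_three_le (hn : 3 ≤ n) : (2 : ZMod n) ≠ 0 := by
  intro h
  have := Nat.le_of_dvd two_pos ((ZMod.natCast_eq_zero_iff 2 n).1 (by exact_mod_cast h))
  omega

lemma mem_cycleEdge_iff (hv : Function.Injective v) (r t : ZMod n) :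
    v r ∈ cycleEdge v t ↔ t = r ∨ t = r - 1 := by
  simp only [cycleEdge, Sym2.mem_iff, hv.eq_iff, eq_sub_iff_add_eq]
  tauto

lemma cycleEdge_injective (hv : Function.Injective v) (hn : 3 ≤ n) :
    Function.Injective (cycleEdge v) := by
  intro a b h
  rcases Sym2.eq_iff.1 h with ⟨h₁, -⟩ | ⟨h₁, h₂⟩
  · exact hv h₁
  · exact absurd (by linear_combination hv h₂ - hv h₁) (ZMod.two_ne_zero_of_three_le hn)

variable [NeZero n] [NeZero m] [DecidableEq α]

def cycleEdges (v : ZMod n → α) : Finset (Sym2 α) := univ.image (cycleEdge v)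

lemma card_cycleEdges (hv : Function.Injective v) (hn : 3 ≤ n) : #(cycleEdges v) = n := by
  rw [cycleEdges, card_image_of_injective _ (cycleEdge_injective hv hn), card_univ, ZMod.card]

lemma cycleEdge_mem_cycleEdges (t : ZMod n) : cycleEdge v t ∈ cycleEdges v :=
  mem_image_of_mem _ (mem_univ t)

lemma exists_eq_of_mem_of_mem_cycleEdges {x : α} {e : Sym2 α} (hx : x ∈ e)
    (he : e ∈ cycleEdges v) : ∃ r, x = v r := by
  obtain ⟨t, -, rfl⟩ := mem_image.1 he
  rcases Sym2.mem_iff.1 hx with rfl | rfl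
  exacts [⟨t, rfl⟩, ⟨t + 1, rfl⟩]

lemma filter_mem_cycleEdges (hv : Function.Injective v) (r : ZMod n) :
    (cycleEdges v).filter (v r ∈ ·) = {cycleEdge v (r - 1), cycleEdge v r} := by
  ext e
  simp only [cycleEdges, mem_filter, mem_image, mem_univ, true_and, mem_insert, mem_singleton]
  constructor
  · rintro ⟨⟨t, rfl⟩, hr⟩
    rcases (mem_cycleEdge_iff hv r t).1 hr with rfl | rfl <;> simp
  · rintro (rfl | rfl)
    exacts [⟨⟨_, rfl⟩, (mem_cycleEdge_iff hv _ _).2 (Or.inr rfl)⟩,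
      ⟨⟨_, rfl⟩, (mem_cycleEdge_iff hv _ _).2 (Or.inl rfl)⟩]

lemma card_filter_mem_cycleEdges_le (hv : Function.Injective v) (x : α) :
    #((cycleEdges v).filter (x ∈ ·)) ≤ 2 := by
  by_cases hx : ∃ r, x = v r
  · obtain ⟨r, rfl⟩ := hx
    rw [filter_mem_cycleEdges hv]
    exact card_le_two
  · rw [filter_false_of_mem fun e he hxe => hx (exists_eq_of_mem_of_mem_cycleEdges hxe he)]
    simp

lemma card_filter_mem_cycleEdges (hv : Function.Injective v) (hn : 3 ≤ n) (r : ZMod n) :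
    #((cycleEdges v).filter (v r ∈ ·)) = 2 := by
  rw [filter_mem_cycleEdges hv, card_pair]
  refine fun h => ZMod.two_ne_zero_of_three_le hn ?_
  linear_combination (-2 : ZMod n) * cycleEdge_injective hv hn h

lemma filter_mem_cycleEdges_eq_of_subset (hv : Function.Injective v) (hw : Function.Injective w)
    (hn : 3 ≤ n) (hsub : cycleEdges v ⊆ cycleEdges w) (r : ZMod n) :
    (cycleEdges v).filter (v r ∈ ·) = (cycleEdges w).filter (v r ∈ ·) :=
  eq_of_subset_of_card_le (filter_subset_filter _ hsub)
    ((card_filter_mem_cycleEdges_le hw _).trans (card_filter_mem_cycleEdges hv hn r).ge)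

lemma cycleEdge_add_one_mem_of_subset (hv : Function.Injective v) (hw : Function.Injective w)
    (hn : 3 ≤ n) (hsub : cycleEdges v ⊆ cycleEdges w) {t : ZMod m}
    (ht : cycleEdge w t ∈ cycleEdges v) : cycleEdge w (t + 1) ∈ cycleEdges v := by
  obtain ⟨r, hr⟩ := exists_eq_of_mem_of_mem_cycleEdges (Sym2.mem_mk_right _ _) ht
  have : cycleEdge w (t + 1) ∈ (cycleEdges w).filter (v r ∈ ·) :=
    mem_filter.2 ⟨cycleEdge_mem_cycleEdges _, hr ▸ Sym2.mem_mk_left _ _⟩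
  rw [← filter_mem_cycleEdges_eq_of_subset hv hw hn hsub] at this
  exact (mem_filter.1 this).1

lemma cycleEdges_subset_of_subset (hv : Function.Injective v) (hw : Function.Injective w)
    (hn : 3 ≤ n) (hsub : cycleEdges v ⊆ cycleEdges w) : cycleEdges w ⊆ cycleEdges v := by
  obtain ⟨t₀, -, ht₀⟩ := mem_image.1 (hsub (cycleEdge_mem_cycleEdges 0))
  have hwalk : ∀ k : ℕ, cycleEdge w (t₀ + k) ∈ cycleEdges v := by
    intro k
    induction k with
    | zero => simpa [ht₀] using cycleEdge_mem_cycleEdges 0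
    | succ k ih =>
      simpa [add_assoc] using cycleEdge_add_one_mem_of_subset hv hw hn hsub ih
  rintro e he
  obtain ⟨t, -, rfl⟩ := mem_image.1 he
  simpa using hwalk (t - t₀).val

lemma le_of_cycleEdges_subset (hv : Function.Injective v) (hw : Function.Injective w)
    (hn : 3 ≤ n) (hm : 3 ≤ m) (hsub : cycleEdges v ⊆ cycleEdges w) : m ≤ n := by
  calc m = #(cycleEdges w) := (card_cycleEdges hw hm).symm
    _ ≤ #(cycleEdges v) := card_le_card (cycleEdges_subset_of_subset hv hw hn hsub)
    _ = n := card_cycleEdges hv hn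

end CycleEdges

lemma MvPolynomial.prod_X_eq_monomial {σ ι R : Type*} [CommSemiring R] (s : Finset ι)
    (f : ι → σ) :
    ∏ t ∈ s, (X (f t) : MvPolynomial σ R) = monomial (∑ t ∈ s, Finsupp.single (f t) 1) 1 := by
  simp only [X, monomial_sum_one]

lemma MvPolynomial.prod_X_dvd_prod_X_iff {σ R : Type*} [CommRing R] [IsDomain R]
    {s t : Finset σ} : ∏ e ∈ s, (X e : MvPolynomial σ R) ∣ ∏ e ∈ t, X e ↔ s ⊆ t := by
  refine ⟨fun h e he => ?_, prod_dvd_prod_of_subset _ _ _⟩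
  obtain ⟨e', he', hee'⟩ := (X_prime.dvd_finsetProd_iff _).1 ((dvd_prod_of_mem _ he).trans h)
  rwa [X_dvd_X.1 hee']

lemma MvPolynomial.exists_dvd_of_monomial_mem_span {σ R : Type*} [CommSemiring R] [Nontrivial R]
    {G : Set (MvPolynomial σ R)} (hG : ∀ g ∈ G, ∃ d, g = monomial d 1) {d : σ →₀ ℕ}
    (h : monomial d 1 ∈ Ideal.span G) : ∃ g ∈ G, g ∣ monomial d 1 := by
  classical
  have hG' : G = (fun s => monomial s 1) '' {s | monomial s 1 ∈ G} := by
    ext g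
    refine ⟨fun hg => ?_, fun ⟨s, hs, hsg⟩ => hsg ▸ hs⟩
    obtain ⟨s, rfl⟩ := hG g hg
    exact ⟨s, hg, rfl⟩
  rw [hG', mem_ideal_span_monomial_image_iff_dvd] at h
  have hd : d ∈ (monomial d (1 : R)).support := by
    rw [support_monomial, if_neg one_ne_zero]
    exact mem_singleton_self d
  obtain ⟨s, hs, hdvd⟩ := h d hd
  rw [coeff_monomial, if_pos rfl] at hdvd
  exact ⟨_, hs, hdvd⟩

section CycleMonomials

variable {K : Type*} [Field K]

lemma exists_cycleMono_eq_monomial (ε : ℕ → ℕ) (i : ℕ) : ∃ d, cycleMono K ε i = monomial d 1 :=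
  ⟨_, by rw [cycleMono, prod_X_eq_monomial, X, monomial_mul, one_mul]⟩

lemma cycleMono_eq_prod_cycleEdge (ε : ℕ → ℕ) (i : ℕ) [NeZero i] :
    cycleMono K ε i = ∏ t : ZMod i, X (cycleEdge (ε ∘ ZMod.val) t) := by
  obtain ⟨m, rfl⟩ : ∃ m, i = m + 1 := Nat.exists_eq_add_one.2 (Nat.pos_of_neZero i)
  rw [cycleMono, Nat.add_sub_cancel, ← Fin.prod_univ_eq_prod_range]
  refine Eq.trans ?_ (Fin.prod_univ_castSucc (n := m) _).symm
  congr 1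
  · refine Finset.prod_congr rfl fun t _ => ?_
    change X s(ε t, ε (t + 1)) = X s(ε (Fin.castSucc t : Fin (m + 1)), ε ↑(t.castSucc + 1))
    rw [Fin.val_add_one_of_lt' (by simp), Fin.val_castSucc]
  · change X s(ε 0, ε m) = X s(ε (Fin.last m), ε ↑(Fin.last m + 1))
    rw [Fin.last_add_one, Fin.val_last, Fin.val_zero, Sym2.eq_swap]

lemma cycleMono_eq_prod_cycleEdges {ε : ℕ → ℕ} (hε : Function.Injective ε) {i : ℕ} [NeZero i]
    (hi : 3 ≤ i) : cycleMono K ε i = ∏ e ∈ cycleEdges (ε ∘ ZMod.val : ZMod i → ℕ), X e := by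
  rw [cycleMono_eq_prod_cycleEdge, cycleEdges,
    prod_image (cycleEdge_injective (hε.comp (ZMod.val_injective i)) hi).injOn]

theorem cycleMono_not_dvd {ε ε' : ℕ → ℕ} (hε : Function.Injective ε)
    (hε' : Function.Injective ε') {i j : ℕ} (hi : 3 ≤ i) (hij : i < j) :
    ¬ cycleMono K ε i ∣ cycleMono K ε' j := by
  have : NeZero i := ⟨by omega⟩
  have : NeZero j := ⟨by omega⟩
  rw [cycleMono_eq_prod_cycleEdges hε hi, cycleMono_eq_prod_cycleEdges hε' (by omega),
    prod_X_dvd_prod_X_iff]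
  intro hsub
  have := le_of_cycleEdges_subset (hε.comp (ZMod.val_injective i))
    (hε'.comp (ZMod.val_injective j)) hi (by omega) hsub
  omega

lemma cycleIdeal_mono : Monotone (cycleIdeal K) := fun _ _ hrs =>
  Ideal.span_mono fun _ ⟨i, hi, hir, ε, hε, hp⟩ => ⟨i, hi, hir.trans hrs, ε, hε, hp⟩

lemma cycleMono_notMem_cycleIdeal {ε : ℕ → ℕ} (hε : Function.Injective ε) {r : ℕ} :
    cycleMono K ε (r + 1) ∉ cycleIdeal K r := by
  obtain ⟨d, hd⟩ := exists_cycleMono_eq_monomial (K := K) ε (r + 1)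
  rw [hd, cycleIdeal]
  intro hmem
  obtain ⟨_, ⟨i, hi, hir, ε', hε', rfl⟩, hdvd⟩ := exists_dvd_of_monomial_mem_span (h := hmem)
    fun _ hg => by
      obtain ⟨i, -, -, ε', -, rfl⟩ := hg
      exact exists_cycleMono_eq_monomial ε' i
  exact cycleMono_not_dvd hε' hε hi (by omega) (hd ▸ hdvd)

end CycleMonomials

/-- No image of the cycle monomial `u_i` under an injection of vertices divides an
image of `u_j` when `3 ≤ i < j`; consequently the chain of ideals generated by the
orbits of `u₃`, then `u₃,u₄`, then `u₃,u₄,u₅`, … is strictly increasing. -/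
theorem cycle_monomials_not_divide (K : Type*) [Field K] :
    (∀ i j : ℕ, 3 ≤ i → i < j → ∀ ε ε' : ℕ → ℕ,
      Function.Injective ε → Function.Injective ε' →
        ¬ cycleMono K ε i ∣ cycleMono K ε' j) ∧
    (∀ r : ℕ, 3 ≤ r → cycleIdeal K r < cycleIdeal K (r + 1)) := by
  refine ⟨fun i j hi hij ε ε' hε hε' => cycleMono_not_dvd hε hε' hi hij, fun r hr => ?_⟩
  refine lt_of_le_of_ne (cycleIdeal_mono r.le_succ) fun heq => ?_
  have hmem : cycleMono K id (r + 1) ∈ cycleIdeal K (r + 1) :=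
    Ideal.subset_span ⟨r + 1, by omega, le_rfl, id, Function.injective_id, rfl⟩
  exact cycleMono_notMem_cycleIdeal Function.injective_id (heq ▸ hmem)
end

section
/- Let K be a noetherian commutative ring and (P, ≤) a well-partial-ordered set. Suppose to each p ∈ P is assigned an ideal I_p ⊆ K such that p ≤ q implies I_p ⊆ I_q. Define p ≤' q iff p ≤ q and I_p = I_q. Then ≤' is a well-partial-order on P. -/
theorem WellQuasiOrdered.le_and_eq_of_monotone {P α : Type*} [Preorder P] [PartialOrder α]
    [WellFoundedGT α] (hP : WellQuasiOrdered (α := P) (· ≤ ·)) {I : P → α} (hI : Monotone I) :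
    WellQuasiOrdered fun p q : P => p ≤ q ∧ I p = I q := by
  intro f
  obtain ⟨g, hg⟩ := hP.exists_monotone_subseq f
  obtain ⟨n, hn⟩ := WellFoundedGT.monotone_chain_condition
    ⟨fun m => I (f (g m)), fun _ _ h => hI (hg _ _ h)⟩
  exact ⟨g n, g (n + 1), g.strictMono n.lt_succ_self, hg _ _ n.le_succ, hn _ n.le_succ⟩

/-- Let `K` be a noetherian commutative ring and `(P, ≤)` a well-partial-ordered set.
If `p ↦ I_p` assigns ideals of `K` monotonically, then the refined order
`p ≤' q ↔ (p ≤ q ∧ I_p = I_q)` is again a well-partial-order. -/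
theorem refined_order_wpo (K : Type*) [CommRing K] [IsNoetherianRing K]
    (P : Type*) [PartialOrder P]
    (hP : ∀ f : ℕ → P, ∃ i j, i < j ∧ f i ≤ f j)
    (I : P → Ideal K) (hmono : ∀ p q : P, p ≤ q → I p ≤ I q) :
    ∀ f : ℕ → P, ∃ i j, i < j ∧ (f i ≤ f j ∧ I (f i) = I (f j)) :=
  -- `IsNoetherianRing K` enters through the instance `WellFoundedGT (Ideal K)`.
  WellQuasiOrdered.le_and_eq_of_monotone hP fun p q => hmono p q
end
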